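/- Assume H = I + O(δ), i.e. |H − I| = |δ|. Then there exists a constant C > 0, independent of δ and r, such that γ_H(∅, r) ≤ C δ² r³ for every r > 0. -/

import Mathlib

open MeasureTheory Filter Set

noncomputable section

/-- ℝ³, the ambient space of the beam. -/
abbrev E3 := EuclideanSpace ℝ (Fin 3)
/-- ℝ², the plane of the cross-section. -/
abbrev E2 := EuclideanSpace ℝ (Fin 2)
/-- Real 3×3 matrices. -/
abbrev M33 := Matrix (Fin 3) (Fin 3) ℝ

/-- Frobenius norm of a 3×3 matrix. -/
def frob (A : M33) : ℝ := Real.sqrt (∑ i, ∑ j, (A i j)^2)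

/-- The special orthogonal group SO(3) as a set of matrices. -/
def SO3 : Set M33 := {R | R.transpose * R = 1 ∧ R.det = 1}

/-- The energy well SO(3)H. -/
def SO3H (H : M33) : Set M33 := (fun R => R * H) '' SO3

/-- Distance (w.r.t. the Frobenius norm) from a matrix to a set of matrices. -/
def mdist (A : M33) (K : Set M33) : ℝ := sInf ((fun R => frob (A - R)) '' K)

/-- The infinite cylinder ℝ × S_r, where S_r is the open disk of radius r. -/
def cyl (r : ℝ) : Set E3 := {x | (x 1)^2 + (x 2)^2 < r^2}

/-- The finite piece (−M, M) × S_r of the cylinder. -/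
def slab (r M : ℝ) : Set E3 := {x ∈ cyl r | |x 0| < M}

/-- The infinite beam with square cross-section Q_r = (−r,r)². -/
def cylQ (r : ℝ) : Set E3 := {x | |x 1| < r ∧ |x 2| < r}

/-- Partial derivative in the i-th coordinate direction. -/
def pder (i : Fin 3) (f : E3 → ℝ) (x : E3) : ℝ := fderiv ℝ f x (EuclideanSpace.single i 1)

/-- Curl of a vector field on ℝ³. -/
def curl3 (Φ : E3 → E3) (x : E3) : Fin 3 → ℝ :=
  ![pder 1 (fun y => Φ y 2) x - pder 2 (fun y => Φ y 1) x,
    pder 2 (fun y => Φ y 0) x - pder 0 (fun y => Φ y 2) x,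
    pder 0 (fun y => Φ y 1) x - pder 1 (fun y => Φ y 0) x]

/-- Embedding of the cross-sectional plane into ℝ³ as {x₁ = 0}. -/
def emb2 (y : E2) : E3 := (WithLp.equiv 2 (Fin 3 → ℝ)).symm ![0, y 0, y 1]

/-- Smooth compactly supported test vector fields supported in U. -/
structure IsTestOn (U : Set E3) (Φ : E3 → E3) : Prop where
  smooth : ContDiff ℝ (⊤ : ℕ∞) Φ
  cpt : HasCompactSupport Φ
  supp : tsupport Φ ⊆ U

/-- Line integral of a test field along the (parametrised) dislocation curve,
i.e. ∫_Γ Φ ⬝ Γ̇ dH¹ for Γ = {(0, γ(t)) : t ∈ [0,1]}. -/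
def lineInt (γc : ℝ → E2) (Φ : E3 → E3) : ℝ :=
  ∫ t in Ioo (0:ℝ) 1,
    (deriv (fun s => γc s 0) t * Φ (emb2 (γc t)) 1 + deriv (fun s => γc s 1) t * Φ (emb2 (γc t)) 2)

/-- curl F = −b ⊗ Γ̇ dH¹⌞Γ in the sense of distributions on U. -/
def HasDislocCurl (U : Set E3) (F : E3 → M33) (bv : Fin 3 → ℝ) (γc : ℝ → E2) : Prop :=
  ∀ Φ : E3 → E3, IsTestOn U Φ → ∀ i : Fin 3,
    (∫ x in U, ∑ k, F x i k * curl3 Φ x k) = -(bv i) * lineInt γc Φ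

/-- curl F = −∑ᵢ bᵢ ⊗ Γ̇ᵢ dH¹⌞Γᵢ in the sense of distributions on U
(finitely many dislocation curves with their Burgers vectors). -/
def HasMultiDislocCurl (U : Set E3) (F : E3 → M33) (N : ℕ)
    (bvs : Fin N → Fin 3 → ℝ) (γs : Fin N → ℝ → E2) : Prop :=
  ∀ Φ : E3 → E3, IsTestOn U Φ → ∀ i : Fin 3,
    (∫ x in U, ∑ k, F x i k * curl3 Φ x k) = -∑ j, bvs j i * lineInt (γs j) Φ

/-- curl F = 0 in the sense of distributions on U. -/
def IsCurlFree (U : Set E3) (F : E3 → M33) : Prop :=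
  ∀ Φ : E3 → E3, IsTestOn U Φ → ∀ i : Fin 3,
    (∫ x in U, ∑ k, F x i k * curl3 Φ x k) = 0

/-- F ∈ L^p_loc(U; M^{3×3}). -/
def LpLocOn (p : ℝ) (U : Set E3) (F : E3 → M33) : Prop :=
  (∀ i j : Fin 3, Measurable fun x => F x i j) ∧
  ∀ K : Set E3, IsCompact K → K ⊆ U → IntegrableOn (fun x => frob (F x) ^ p) K volume

/-- F ∈ L^p(U; M^{3×3}) (componentwise). -/
def MemLpOn (p : ℝ) (U : Set E3) (F : E3 → M33) : Prop :=
  ∀ i j : Fin 3, MemLp (fun x => F x i j) (ENNReal.ofReal p) (volume.restrict U)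

/-- The heterogeneous stored-energy density W(x, A). -/
def Wtot (W1 W2 : M33 → ℝ) (x : E3) (A : M33) : ℝ := if x 0 < 0 then W1 A else W2 A

/-- Frame indifference of a stored-energy density. -/
def FrameIndifferent (Wf : M33 → ℝ) : Prop := ∀ R ∈ SO3, ∀ A, Wf (R * A) = Wf A

/-- Two-sided growth condition (iii): C₁(dist²(A,K) ∧ (|A|^p+1)) ≤ W(A) ≤ C₂(dist²(A,K) ∧ (|A|^p+1)). -/
def GrowthBetween (p C₁ C₂ : ℝ) (K : Set M33) (Wf : M33 → ℝ) : Prop :=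
  ∀ A, C₁ * min ((mdist A K)^2) (frob A ^ p + 1) ≤ Wf A ∧
       Wf A ≤ C₂ * min ((mdist A K)^2) (frob A ^ p + 1)

/-- The set of transition energies: energies of fields F satisfying the constraint `Cond`
which equal P on (−∞,−M)×S_r and Q on (M,∞)×S_r; the transition cost is its infimum. -/
def transSet (p r : ℝ) (W1 W2 : M33 → ℝ) (Cond : (E3 → M33) → Prop) (P Q : M33) : Set ℝ :=
  {e | ∃ M : ℝ, 0 < M ∧ ∃ F : E3 → M33, LpLocOn p (cyl r) F ∧ Cond F ∧
    (∀ᵐ x ∂(volume.restrict (cyl r)), x 0 < -M → F x = P) ∧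
    (∀ᵐ x ∂(volume.restrict (cyl r)), M < x 0 → F x = Q) ∧
    e = ∫ x in slab r M, Wtot W1 W2 x (F x)}

/-- Gradient matrix (Du)_{ij} = ∂u_i/∂x_j of a map u : ℝ³ → ℝ³. -/
def gradMat (u : E3 → E3) (x : E3) : M33 :=
  Matrix.of fun i j => fderiv ℝ u x (EuclideanSpace.single j 1) i

/-- The set of transition energies in the dislocation-free (gradient) case,
for a beam with region U = ℝ × ω. -/
def gradTransSet (p : ℝ) (U : Set E3) (W1 W2 : M33 → ℝ) (Hm : M33) : Set ℝ :=
  {e | ∃ M : ℝ, 0 < M ∧ ∃ u : E3 → E3, (∀ x ∈ U, DifferentiableAt ℝ u x) ∧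
    LpLocOn p U (gradMat u) ∧
    (∀ x ∈ U, x 0 < -M → gradMat u x = 1) ∧
    (∀ x ∈ U, M < x 0 → gradMat u x = Hm) ∧
    e = ∫ x in {y ∈ U | |y 0| < M}, Wtot W1 W2 x (gradMat u x)}

/-- The dislocation curve Γ as a subset of the cross-section {x₁ = 0} of the beam. -/
def ΓSet3 (γc : ℝ → E2) : Set E3 := emb2 '' (γc '' Icc (0:ℝ) 1)

/-- inf_Γ γ_H(Γ, r): infimum over all admissible (finite systems of) dislocation lines in S_r
of the corresponding transition cost. -/
def dislocInf (p r : ℝ) (W1 W2 : M33 → ℝ) (Hm : M33) : ℝ :=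
  sInf { c | ∃ (N : ℕ) (bvs : Fin N → Fin 3 → ℝ) (γs : Fin N → ℝ → E2),
    (∀ j, ∃ K : NNReal, LipschitzWith K (γs j)) ∧
    (∀ j, ∀ t ∈ Icc (0:ℝ) 1, (γs j t 0)^2 + (γs j t 1)^2 < r^2) ∧
    c = sInf (transSet p r W1 W2 (fun F => HasMultiDislocCurl (cyl r) F N bvs γs) 1 Hm) }

/-- Rescaling F_h = (F¹ | (1/h)F² | (1/h)F³) (columnwise). -/
def scaleCols (h : ℝ) (A : M33) : M33 :=
  Matrix.of fun i j => if j = 0 then A i j else A i j / h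

/-- Membership in the admissible class 𝓕^{(h)}: L^p fields on Ω = (−L,L)×S_r whose
distributional curl is −h b ⊗ Γ̇ dH¹⌞Γ. -/
def memFh (p r L : ℝ) (bv : Fin 3 → ℝ) (γc : ℝ → E2) (h : ℝ) (F : E3 → M33) : Prop :=
  MemLpOn p (slab r L) F ∧ HasDislocCurl (slab r L) F (h • bv) γc

/-- Weak L^p convergence on U of a sequence of matrix fields (tested against L^{p'} fields). -/
def WeakLpSeq (p : ℝ) (U : Set E3) (Fs : ℕ → E3 → M33) (Fl : E3 → M33) : Prop :=
  ∀ G : E3 → M33, MemLpOn (p/(p-1)) U G →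
    Tendsto (fun n => ∫ x in U, ∑ i, ∑ j, Fs n x i j * G x i j) atTop
      (nhds (∫ x in U, ∑ i, ∑ j, Fl x i j * G x i j))

/-- Weak L^p convergence on U of a family of matrix fields as h → 0⁺. -/
def WeakLpFam (p : ℝ) (U : Set E3) (Fs : ℝ → E3 → M33) (Fl : E3 → M33) : Prop :=
  ∀ G : E3 → M33, MemLpOn (p/(p-1)) U G →
    Tendsto (fun h => ∫ x in U, ∑ i, ∑ j, Fs h x i j * G x i j) (nhdsWithin 0 (Ioi 0))
      (nhds (∫ x in U, ∑ i, ∑ j, Fl x i j * G x i j))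

/-- The limit class 𝓕 of one-dimensional configurations. -/
def Fclass (p r L ζ1 : ℝ) : Set (E3 → M33) :=
  {F | MemLpOn p (slab r L) F ∧
    (∃ g : ℝ → M33, ∀ᵐ x ∂(volume.restrict (slab r L)), F x = g (x 0)) ∧
    (∀ᵐ x ∂(volume.restrict (slab r L)), x 0 < 0 → Real.sqrt (∑ i, (F x i 0)^2) ≤ 1) ∧
    (∀ᵐ x ∂(volume.restrict (slab r L)), 0 < x 0 → Real.sqrt (∑ i, (F x i 0)^2) ≤ ζ1) ∧
    (∀ᵐ x ∂(volume.restrict (slab r L)), ∀ i, F x i 1 = 0 ∧ F x i 2 = 0)}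

open Classical in
/-- The rescaled energy (1/h) I^{(h)}, as an extended real number (+∞ off 𝓕^{(h)}). -/
def eIh (p r L : ℝ) (W1 W2 : M33 → ℝ) (bv : Fin 3 → ℝ) (γc : ℝ → E2)
    (Fam : ℝ → E3 → M33) (h : ℝ) : EReal :=
  if memFh p r L bv γc h (Fam h) then
    (((1/h) * ∫ x in slab r L, Wtot W1 W2 x (scaleCols h (Fam h x)) : ℝ) : EReal)
  else ⊤

open Classical in
/-- The Γ-limit functional: γ_H on 𝓕 and +∞ otherwise. -/
def Ilim (γH : ℝ) (Fcl : Set (E3 → M33)) (F : E3 → M33) : EReal :=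
  if F ∈ Fcl then (γH : EReal) else ⊤

end

noncomputable section AuxUB
namespace AuxUB

open Real

/-- coordinate continuous linear map on `E3`. -/
def coordL (j : Fin 3) : E3 →L[ℝ] ℝ := EuclideanSpace.proj j

lemma coordL_apply (j : Fin 3) (x : E3) : coordL j x = x j := rfl

def eta (r t : ℝ) : ℝ := Real.smoothTransition ((t + r) / (2 * r))

def eta' (r t : ℝ) : ℝ := deriv Real.smoothTransition ((t + r) / (2 * r)) * (1 / (2 * r))

lemma hasDerivAt_eta (r t : ℝ) : HasDerivAt (eta r) (eta' r t) t := by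
  have h1 : HasDerivAt (fun s : ℝ => (s + r) / (2 * r)) (1 / (2 * r)) t := by
    simpa using ((hasDerivAt_id t).add_const r).div_const (2 * r)
  have h2 : HasDerivAt Real.smoothTransition
      (deriv Real.smoothTransition ((t + r) / (2 * r))) ((t + r) / (2 * r)) :=
    ((Real.smoothTransition.contDiff (n := 1)).differentiable (by norm_num) _).hasDerivAt
  exact h2.comp t h1

lemma derivST_zero_left {s : ℝ} (hs : s < 0) : deriv Real.smoothTransition s = 0 := by
  have h : Real.smoothTransition =ᶠ[nhds s] fun _ => (0 : ℝ) :=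
    Filter.eventually_of_mem (Iio_mem_nhds hs) fun y hy =>
      Real.smoothTransition.zero_of_nonpos (le_of_lt hy)
  rw [h.deriv_eq]; simp

lemma derivST_zero_right {s : ℝ} (hs : 1 < s) : deriv Real.smoothTransition s = 0 := by
  have h : Real.smoothTransition =ᶠ[nhds s] fun _ => (1 : ℝ) :=
    Filter.eventually_of_mem (Ioi_mem_nhds hs) fun y hy =>
      Real.smoothTransition.one_of_one_le (le_of_lt hy)
  rw [h.deriv_eq]; simp

lemma eta_left {r t : ℝ} (hr : 0 < r) (ht : t < -r) : eta r t = 0 :=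
  Real.smoothTransition.zero_of_nonpos
    (div_nonpos_of_nonpos_of_nonneg (by linarith) (by linarith))

lemma eta'_left {r t : ℝ} (hr : 0 < r) (ht : t < -r) : eta' r t = 0 := by
  have h : (t + r) / (2 * r) < 0 := div_neg_of_neg_of_pos (by linarith) (by linarith)
  rw [eta', derivST_zero_left h, zero_mul]

lemma eta_right {r t : ℝ} (hr : 0 < r) (ht : r < t) : eta r t = 1 :=
  Real.smoothTransition.one_of_one_le ((le_div_iff₀ (by linarith)).mpr (by linarith))

lemma eta'_right {r t : ℝ} (hr : 0 < r) (ht : r < t) : eta' r t = 0 := by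
  have h : 1 < (t + r) / (2 * r) := (one_lt_div (by linarith)).mpr (by linarith)
  rw [eta', derivST_zero_right h, zero_mul]

lemma eta_mem (r t : ℝ) : 0 ≤ eta r t ∧ eta r t ≤ 1 :=
  ⟨Real.smoothTransition.nonneg _, Real.smoothTransition.le_one _⟩

lemma abs_eta'_le {r : ℝ} (hr : 0 < r) {K : ℝ}
    (hK : ∀ s, |deriv Real.smoothTransition s| ≤ K) (t : ℝ) :
    |eta' r t| ≤ K / (2 * r) := by
  rw [eta', abs_mul, abs_of_pos (by positivity : (0:ℝ) < 1 / (2 * r)),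
    div_eq_mul_one_div K (2 * r)]
  exact mul_le_mul_of_nonneg_right (hK _) (by positivity)

def gg (ζ : Fin 3 → ℝ) (r : ℝ) (i : Fin 3) (t : ℝ) : ℝ := 1 + (ζ i - 1) * eta r t

def gg' (ζ : Fin 3 → ℝ) (r : ℝ) (i : Fin 3) (t : ℝ) : ℝ := (ζ i - 1) * eta' r t

def Dmat (ζ : Fin 3 → ℝ) (r : ℝ) (x : E3) : M33 :=
  Matrix.of fun i j =>
    (if i = j then gg ζ r i (x 0) else 0) + (if j = 0 then x i * gg' ζ r i (x 0) else 0)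

def uu (ζ : Fin 3 → ℝ) (r : ℝ) (x : E3) : E3 :=
  (PiLp.continuousLinearEquiv 2 ℝ (fun _ : Fin 3 => ℝ)).symm (fun i => x i * gg ζ r i (x 0))

def DmatL (ζ : Fin 3 → ℝ) (r : ℝ) (x : E3) : E3 →L[ℝ] (Fin 3 → ℝ) :=
  ContinuousLinearMap.pi fun i =>
    x i • (gg' ζ r i (x 0) • coordL 0) + gg ζ r i (x 0) • coordL i

lemma hasFDerivAt_uu (ζ : Fin 3 → ℝ) (r : ℝ) (x : E3) :
    HasFDerivAt (uu ζ r)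
      (((PiLp.continuousLinearEquiv 2 ℝ (fun _ : Fin 3 => ℝ)).symm :
          (Fin 3 → ℝ) →L[ℝ] E3).comp (DmatL ζ r x)) x := by
  have hv : HasFDerivAt (fun y : E3 => fun i => y i * gg ζ r i (y 0)) (DmatL ζ r x) x := by
    apply hasFDerivAt_pi''
    intro i
    rw [DmatL, ContinuousLinearMap.proj_pi]
    have hci : HasFDerivAt (fun y : E3 => y i) (coordL i) x := (coordL i).hasFDerivAt
    have hc0 : HasFDerivAt (fun y : E3 => y 0) (coordL 0) x := (coordL 0).hasFDerivAt
    have hg : HasDerivAt (gg ζ r i) (gg' ζ r i (x 0)) (x 0) :=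
      ((hasDerivAt_eta r (x 0)).const_mul (ζ i - 1)).const_add 1
    have hgc : HasFDerivAt (fun y : E3 => gg ζ r i (y 0)) (gg' ζ r i (x 0) • coordL 0) x :=
      by have := hg.comp_hasFDerivAt x hc0; exact this
    exact hci.mul hgc
  exact ((PiLp.continuousLinearEquiv 2 ℝ (fun _ : Fin 3 => ℝ)).symm.hasFDerivAt).comp x hv

lemma gradMat_uu (ζ : Fin 3 → ℝ) (r : ℝ) (x : E3) :
    gradMat (uu ζ r) x = Dmat ζ r x := by
  have h := (hasFDerivAt_uu ζ r x).fderiv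
  ext i j
  rw [gradMat, Matrix.of_apply, h, Dmat, Matrix.of_apply]
  simp only [ContinuousLinearMap.coe_comp', Function.comp_apply,
    ContinuousLinearEquiv.coe_coe, PiLp.coe_symm_continuousLinearEquiv,
    PiLp.toLp_apply, DmatL, ContinuousLinearMap.pi_apply,
    ContinuousLinearMap.add_apply, ContinuousLinearMap.smul_apply, coordL_apply,
    EuclideanSpace.single_apply, smul_eq_mul]
  by_cases h1 : i = j <;> by_cases h2 : j = 0 <;>
    simp [h1, h2, eq_comm] <;> ring

end AuxUB
end AuxUB

noncomputable section AuxUB2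
namespace AuxUB
open Real

lemma continuous_eta_c (r : ℝ) : Continuous fun x : E3 => eta r (x 0) :=
  Real.smoothTransition.continuous.comp
    (((coordL 0).continuous.add continuous_const).div_const _)

lemma continuous_eta'_c (r : ℝ) : Continuous fun x : E3 => eta' r (x 0) :=
  (((Real.smoothTransition.contDiff (n := 1)).continuous_deriv le_rfl).comp
    (((coordL 0).continuous.add continuous_const).div_const _)).mul continuous_const

lemma continuous_Dmat_entry (ζ : Fin 3 → ℝ) (r : ℝ) (i j : Fin 3) :
    Continuous fun x : E3 => Dmat ζ r x i j := by
  have h1 : Continuous fun x : E3 => gg ζ r i (x 0) :=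
    continuous_const.add (continuous_const.mul (continuous_eta_c r))
  have h2 : Continuous fun x : E3 => x i * gg' ζ r i (x 0) :=
    (coordL i).continuous.mul (continuous_const.mul (continuous_eta'_c r))
  simp only [Dmat, Matrix.of_apply]
  split_ifs
  · exact h1.add h2
  · exact h1.add continuous_const
  · exact continuous_const.add h2
  · exact continuous_const.add continuous_const

lemma continuous_Dmat (ζ : Fin 3 → ℝ) (r : ℝ) : Continuous fun x : E3 => Dmat ζ r x :=
  continuous_matrix fun i j => continuous_Dmat_entry ζ r i j

lemma Dmat_left (ζ : Fin 3 → ℝ) {r : ℝ} (hr : 0 < r) {x : E3} (hx : x 0 < -r) :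
    Dmat ζ r x = 1 := by
  ext i j
  rw [Dmat, Matrix.of_apply, gg, gg', eta_left hr hx, eta'_left hr hx, Matrix.one_apply]
  split_ifs <;> ring

lemma Dmat_right (ζ : Fin 3 → ℝ) {r : ℝ} (hr : 0 < r) {x : E3} (hx : r < x 0) :
    Dmat ζ r x = Matrix.diagonal ζ := by
  ext i j
  rw [Dmat, Matrix.of_apply, gg, gg', eta_right hr hx, eta'_right hr hx,
    Matrix.diagonal_apply]
  split_ifs <;> ring

lemma frob_nonneg (A : M33) : 0 ≤ frob A := Real.sqrt_nonneg _

lemma frob_sq (A : M33) : frob A ^ 2 = ∑ i, ∑ j, (A i j) ^ 2 :=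
  Real.sq_sqrt (by positivity)

lemma abs_entry_le_frob (A : M33) (i j : Fin 3) : |A i j| ≤ frob A := by
  rw [frob, ← Real.sqrt_sq_eq_abs]
  apply Real.sqrt_le_sqrt
  calc (A i j) ^ 2 ≤ ∑ j', (A i j') ^ 2 :=
        Finset.single_le_sum (f := fun j' => (A i j') ^ 2)
          (fun _ _ => sq_nonneg _) (Finset.mem_univ j)
    _ ≤ ∑ i', ∑ j', (A i' j') ^ 2 :=
        Finset.single_le_sum (f := fun i' => ∑ j', (A i' j') ^ 2)
          (fun _ _ => Finset.sum_nonneg fun _ _ => sq_nonneg _) (Finset.mem_univ i)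

lemma mdist_nonneg (A : M33) (S : Set M33) : 0 ≤ mdist A S :=
  Real.sInf_nonneg fun y hy => by
    obtain ⟨R, _, rfl⟩ := hy; exact frob_nonneg _

lemma mdist_le_frob_sub {R : M33} {S : Set M33} (A : M33) (hR : R ∈ S) :
    mdist A S ≤ frob (A - R) :=
  csInf_le ⟨0, fun y hy => by obtain ⟨Q, _, rfl⟩ := hy; exact frob_nonneg _⟩
    ⟨R, hR, rfl⟩

lemma one_mem_SO3 : (1 : M33) ∈ SO3 := ⟨by simp, by simp⟩

lemma mem_SO3H_self (Hm : M33) : Hm ∈ SO3H Hm := ⟨1, one_mem_SO3, one_mul Hm⟩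

lemma growth_nonneg {p C₁ C₂ : ℝ} (hC₁ : 0 ≤ C₁) {S : Set M33} {W : M33 → ℝ}
    (hG : GrowthBetween p C₁ C₂ S W) (A : M33) : 0 ≤ W A :=
  le_trans (mul_nonneg hC₁ (le_min (sq_nonneg _)
    (add_nonneg (Real.rpow_nonneg (frob_nonneg A) p) zero_le_one))) (hG A).1

lemma Wtot_nonneg {p C₁ C₂ : ℝ} (hC₁ : 0 ≤ C₁) {S1 S2 : Set M33} {W1 W2 : M33 → ℝ}
    (hG1 : GrowthBetween p C₁ C₂ S1 W1) (hG2 : GrowthBetween p C₁ C₂ S2 W2)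
    (x : E3) (A : M33) : 0 ≤ Wtot W1 W2 x A := by
  unfold Wtot
  split_ifs
  · exact growth_nonneg hC₁ hG1 A
  · exact growth_nonneg hC₁ hG2 A

end AuxUB
end AuxUB2

open AuxUB

/-- **Proposition 3.4.** Assume H = I + O(δ), i.e. |H − I| = |δ|. Then γ_H(∅, r) ≤ C δ² r³
for every r > 0, with a constant C independent of δ and r (it depends only on p and the
growth constants of the energy density). -/
theorem dislocation_free_cost_upper_bound
    (p : ℝ) (hp1 : 1 < p) (hp2 : p < 2)
    (C₁ C₂ : ℝ) (hC₁ : 0 < C₁) (hC₂ : 0 < C₂) :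
    ∃ C : ℝ, 0 < C ∧
      ∀ (ζ : Fin 3 → ℝ), (∀ i, 0 < ζ i) →
        ∀ Hm : M33, Hm = Matrix.diagonal ζ →
          ∀ W1 W2 : M33 → ℝ, Continuous W1 → Continuous W2 →
            FrameIndifferent W1 → FrameIndifferent W2 →
            GrowthBetween p C₁ C₂ SO3 W1 → GrowthBetween p C₁ C₂ (SO3H Hm) W2 →
            ∀ δ : ℝ, frob (Hm - 1) = |δ| →
              ∀ r : ℝ, 0 < r →
                sInf (gradTransSet p (cyl r) W1 W2 Hm) ≤ C * δ ^ 2 * r ^ 3 := by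
  classical
  obtain ⟨K, hK⟩ := (isCompact_Icc : IsCompact (Icc (0:ℝ) 1)).exists_bound_of_continuousOn
    (((Real.smoothTransition.contDiff (n := 1)).continuous_deriv le_rfl).continuousOn)
  have hK0 : 0 ≤ K := le_trans (norm_nonneg _) (hK 0 ⟨le_refl 0, zero_le_one⟩)
  have hKall : ∀ s : ℝ, |deriv Real.smoothTransition s| ≤ K := by
    intro s
    by_cases h : s ∈ Icc (0:ℝ) 1
    · simpa [Real.norm_eq_abs] using hK s h
    · rcases lt_or_ge s 0 with h' | h'
      · rw [derivST_zero_left h']; simpa using hK0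
      · have h1 : 1 < s := lt_of_not_ge fun hle => h ⟨h', hle⟩
        rw [derivST_zero_right h1]; simpa using hK0
  have h1K : (0:ℝ) < 1 + K := by linarith
  refine ⟨72 * C₂ * (1 + K) ^ 2, mul_pos (mul_pos (by norm_num) hC₂) (pow_pos h1K 2), ?_⟩
  intro ζ hζ Hm hHm W1 W2 hW1c hW2c _ _ hG1 hG2 δ hδ r hr
  -- coordinate bounds on the slab
  have hScoord : ∀ x ∈ slab r r, ∀ i : Fin 3, |x i| ≤ r := by
    rintro x ⟨hc, h0⟩ i
    have hc' : (x 1) ^ 2 + (x 2) ^ 2 < r ^ 2 := hc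
    fin_cases i
    · show |x 0| ≤ r; exact le_of_lt h0
    · show |x 1| ≤ r
      exact (abs_lt_of_sq_lt_sq (by nlinarith [sq_nonneg (x 2)]) hr.le).le
    · show |x 2| ≤ r
      exact (abs_lt_of_sq_lt_sq (by nlinarith [sq_nonneg (x 1)]) hr.le).le
  have hδ0 : ∀ i, |ζ i - 1| ≤ |δ| := by
    intro i
    have h := abs_entry_le_frob (Hm - 1) i i
    rw [hδ] at h
    have heq : (Hm - 1) i i = ζ i - 1 := by
      rw [hHm, Matrix.sub_apply, Matrix.diagonal_apply_eq, Matrix.one_apply_eq]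
    rwa [heq] at h
  have hw1 : ∀ t, |eta r t| ≤ 1 := fun t =>
    abs_le.2 ⟨by linarith [(eta_mem r t).1], (eta_mem r t).2⟩
  have hw2 : ∀ t, |eta r t - 1| ≤ 1 := fun t =>
    abs_le.2 ⟨by linarith [(eta_mem r t).1], by linarith [(eta_mem r t).2]⟩
  have heta'b : ∀ t, |eta' r t| ≤ K / (2 * r) := abs_eta'_le hr hKall
  -- entry bound
  have hent : ∀ x ∈ slab r r, ∀ w : ℝ, |w| ≤ 1 → ∀ i j : Fin 3,
      |(if i = j then (ζ i - 1) * w else 0) +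
        (if j = 0 then x i * gg' ζ r i (x 0) else 0)| ≤ (1 + K) * |δ| := by
    intro x hx w hw i j
    have hxc := hScoord x hx
    have h1 : |(if i = j then (ζ i - 1) * w else 0)| ≤ |δ| := by
      split_ifs
      · rw [abs_mul]
        calc |ζ i - 1| * |w| ≤ |δ| * 1 :=
              mul_le_mul (hδ0 i) hw (abs_nonneg _) (abs_nonneg _)
          _ = |δ| := mul_one _
      · simpa using abs_nonneg δ
    have h2 : |(if j = 0 then x i * gg' ζ r i (x 0) else 0)| ≤ K * |δ| / 2 := by
      split_ifs
      · rw [gg', abs_mul, abs_mul]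
        calc |x i| * (|ζ i - 1| * |eta' r (x 0)|)
            ≤ r * (|δ| * (K / (2 * r))) :=
              mul_le_mul (hxc i)
                (mul_le_mul (hδ0 i) (heta'b (x 0)) (abs_nonneg _) (abs_nonneg _))
                (mul_nonneg (abs_nonneg _) (abs_nonneg _)) hr.le
          _ = K * |δ| / 2 := by field_simp
      · have hnn : (0:ℝ) ≤ K * |δ| / 2 := by positivity
        simpa using hnn
    calc |(if i = j then (ζ i - 1) * w else 0) +
          (if j = 0 then x i * gg' ζ r i (x 0) else 0)|
        ≤ |(if i = j then (ζ i - 1) * w else 0)| +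
          |(if j = 0 then x i * gg' ζ r i (x 0) else 0)| := abs_add_le _ _
      _ ≤ |δ| + K * |δ| / 2 := add_le_add h1 h2
      _ ≤ (1 + K) * |δ| := by nlinarith [abs_nonneg δ]
  -- Frobenius bound
  have hfrob2 : ∀ B : M33, (∀ i j, |B i j| ≤ (1 + K) * |δ|) →
      frob B ^ 2 ≤ 9 * ((1 + K) ^ 2 * δ ^ 2) := by
    intro B hB
    rw [frob_sq]
    have hone : ∀ i j : Fin 3, (B i j) ^ 2 ≤ (1 + K) ^ 2 * δ ^ 2 := by
      intro i j
      calc (B i j) ^ 2 = |B i j| ^ 2 := (sq_abs _).symm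
        _ ≤ ((1 + K) * |δ|) ^ 2 := pow_le_pow_left₀ (abs_nonneg _) (hB i j) 2
        _ = (1 + K) ^ 2 * δ ^ 2 := by rw [mul_pow, sq_abs]
    calc (∑ i, ∑ j, (B i j) ^ 2)
        ≤ ∑ _i : Fin 3, ∑ _j : Fin 3, (1 + K) ^ 2 * δ ^ 2 :=
          Finset.sum_le_sum fun i _ => Finset.sum_le_sum fun j _ => hone i j
      _ = 9 * ((1 + K) ^ 2 * δ ^ 2) := by
          simp [Finset.sum_const]
          ring
  -- pointwise energy bound on the slab
  have hfs : ∀ x ∈ slab r r,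
      Wtot W1 W2 x (Dmat ζ r x) ≤ C₂ * (9 * ((1 + K) ^ 2 * δ ^ 2)) := by
    intro x hx
    unfold Wtot
    split_ifs with hx0
    · have hAe : ∀ i j, (Dmat ζ r x - 1) i j =
          (if i = j then (ζ i - 1) * eta r (x 0) else 0) +
          (if j = 0 then x i * gg' ζ r i (x 0) else 0) := by
        intro i j
        rw [Matrix.sub_apply, Dmat, Matrix.of_apply, gg, Matrix.one_apply]
        split_ifs <;> ring
      have hB : ∀ i j, |(Dmat ζ r x - 1) i j| ≤ (1 + K) * |δ| := fun i j => by
        rw [hAe i j]; exact hent x hx _ (hw1 (x 0)) i j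
      have hmd : (mdist (Dmat ζ r x) SO3) ^ 2 ≤ 9 * ((1 + K) ^ 2 * δ ^ 2) :=
        le_trans (pow_le_pow_left₀ (mdist_nonneg _ _)
          (mdist_le_frob_sub _ one_mem_SO3) 2) (hfrob2 _ hB)
      calc W1 (Dmat ζ r x)
          ≤ C₂ * min ((mdist (Dmat ζ r x) SO3) ^ 2) (frob (Dmat ζ r x) ^ p + 1) := (hG1 _).2
        _ ≤ C₂ * (mdist (Dmat ζ r x) SO3) ^ 2 :=
            mul_le_mul_of_nonneg_left (min_le_left _ _) hC₂.le
        _ ≤ C₂ * (9 * ((1 + K) ^ 2 * δ ^ 2)) := mul_le_mul_of_nonneg_left hmd hC₂.le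
    · have hAe : ∀ i j, (Dmat ζ r x - Hm) i j =
          (if i = j then (ζ i - 1) * (eta r (x 0) - 1) else 0) +
          (if j = 0 then x i * gg' ζ r i (x 0) else 0) := by
        intro i j
        rw [Matrix.sub_apply, Dmat, Matrix.of_apply, gg, hHm, Matrix.diagonal_apply]
        split_ifs <;> ring
      have hB : ∀ i j, |(Dmat ζ r x - Hm) i j| ≤ (1 + K) * |δ| := fun i j => by
        rw [hAe i j]; exact hent x hx _ (hw2 (x 0)) i j
      have hmd : (mdist (Dmat ζ r x) (SO3H Hm)) ^ 2 ≤ 9 * ((1 + K) ^ 2 * δ ^ 2) :=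
        le_trans (pow_le_pow_left₀ (mdist_nonneg _ _)
          (mdist_le_frob_sub _ (mem_SO3H_self Hm)) 2) (hfrob2 _ hB)
      calc W2 (Dmat ζ r x)
          ≤ C₂ * min ((mdist (Dmat ζ r x) (SO3H Hm)) ^ 2) (frob (Dmat ζ r x) ^ p + 1) := (hG2 _).2
        _ ≤ C₂ * (mdist (Dmat ζ r x) (SO3H Hm)) ^ 2 :=
            mul_le_mul_of_nonneg_left (min_le_left _ _) hC₂.le
        _ ≤ C₂ * (9 * ((1 + K) ^ 2 * δ ^ 2)) := mul_le_mul_of_nonneg_left hmd hC₂.le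
  -- measurability / openness of the slab
  have hcont0 : Continuous fun x : E3 => x 0 := (coordL 0).continuous
  have hcont1 : Continuous fun x : E3 => x 1 := (coordL 1).continuous
  have hcont2 : Continuous fun x : E3 => x 2 := (coordL 2).continuous
  have hSopen : IsOpen (slab r r) := by
    have hSeq : slab r r
        = {x : E3 | (x 1) ^ 2 + (x 2) ^ 2 < r ^ 2} ∩ {x : E3 | |x 0| < r} := rfl
    rw [hSeq]
    exact (isOpen_lt ((hcont1.pow 2).add (hcont2.pow 2)) continuous_const).inter
      (isOpen_lt hcont0.abs continuous_const)
  have hSmeas : MeasurableSet (slab r r) := hSopen.measurableSet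
  -- volume estimate
  have hvol : volume (slab r r) ≤ ENNReal.ofReal ((2 * r) ^ 3) := by
    have hsub : slab r r ⊆ (MeasurableEquiv.toLp 2 (Fin 3 → ℝ)).symm ⁻¹'
        (Set.univ.pi fun _ : Fin 3 => Icc (-r) r) := by
      intro x hx i _
      exact abs_le.1 (hScoord x hx i)
    have h2r : r - -r = 2 * r := by ring
    calc volume (slab r r)
        ≤ volume ((MeasurableEquiv.toLp 2 (Fin 3 → ℝ)).symm ⁻¹'
            (Set.univ.pi fun _ : Fin 3 => Icc (-r) r)) := measure_mono hsub
      _ = volume (Set.univ.pi fun _ : Fin 3 => Icc (-r) r) :=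
          (EuclideanSpace.volume_preserving_symm_measurableEquiv_toLp (Fin 3)).measure_preimage_equiv _
      _ = ∏ _i : Fin 3, volume (Icc (-r) r) := volume_pi_pi _
      _ = ENNReal.ofReal (2 * r) ^ 3 := by
          rw [Finset.prod_const, Real.volume_Icc, h2r, Finset.card_univ, Fintype.card_fin]
      _ = ENNReal.ofReal ((2 * r) ^ 3) := (ENNReal.ofReal_pow (by linarith) 3).symm
  have hvollt : volume (slab r r) < ⊤ := lt_of_le_of_lt hvol ENNReal.ofReal_lt_top
  -- integrability
  have hfmeas : Measurable fun x : E3 => Wtot W1 W2 x (Dmat ζ r x) := by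
    unfold Wtot
    exact Measurable.ite (measurableSet_lt hcont0.measurable measurable_const)
      (hW1c.comp (continuous_Dmat ζ r)).measurable
      (hW2c.comp (continuous_Dmat ζ r)).measurable
  have hWnn : ∀ x, 0 ≤ Wtot W1 W2 x (Dmat ζ r x) := fun x =>
    Wtot_nonneg hC₁.le hG1 hG2 x _
  have hconstInt : IntegrableOn (fun _ : E3 => C₂ * (9 * ((1 + K) ^ 2 * δ ^ 2)))
      (slab r r) volume := integrableOn_const hvollt.ne
  have hInt : IntegrableOn (fun x => Wtot W1 W2 x (Dmat ζ r x)) (slab r r) volume := by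
    apply Integrable.mono' hconstInt hfmeas.aestronglyMeasurable
    refine (ae_restrict_iff' hSmeas).2 (Filter.Eventually.of_forall fun x hx => ?_)
    rw [Real.norm_eq_abs, abs_of_nonneg (hWnn x)]
    exact hfs x hx
  have hle1 : (∫ x in slab r r, Wtot W1 W2 x (Dmat ζ r x))
      ≤ (volume (slab r r)).toReal * (C₂ * (9 * ((1 + K) ^ 2 * δ ^ 2))) := by
    have h := setIntegral_mono_on hInt hconstInt hSmeas hfs
    rwa [setIntegral_const, smul_eq_mul] at h
  have hvt : (volume (slab r r)).toReal ≤ 8 * r ^ 3 := by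
    have h := ENNReal.toReal_mono ENNReal.ofReal_ne_top hvol
    rw [ENNReal.toReal_ofReal (by positivity)] at h
    calc (volume (slab r r)).toReal ≤ (2 * r) ^ 3 := h
      _ = 8 * r ^ 3 := by ring
  have hPnn : (0:ℝ) ≤ C₂ * (9 * ((1 + K) ^ 2 * δ ^ 2)) := by positivity
  have hle2 : (∫ x in slab r r, Wtot W1 W2 x (Dmat ζ r x))
      ≤ 72 * C₂ * (1 + K) ^ 2 * δ ^ 2 * r ^ 3 := by
    calc (∫ x in slab r r, Wtot W1 W2 x (Dmat ζ r x))
        ≤ (volume (slab r r)).toReal * (C₂ * (9 * ((1 + K) ^ 2 * δ ^ 2))) := hle1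
      _ ≤ (8 * r ^ 3) * (C₂ * (9 * ((1 + K) ^ 2 * δ ^ 2))) :=
          mul_le_mul_of_nonneg_right hvt hPnn
      _ = 72 * C₂ * (1 + K) ^ 2 * δ ^ 2 * r ^ 3 := by ring
  -- membership of the competitor
  have hgrad : ∀ x : E3, gradMat (uu ζ r) x = Dmat ζ r x := gradMat_uu ζ r
  have hmem : (∫ x in {y ∈ cyl r | |y 0| < r}, Wtot W1 W2 x (gradMat (uu ζ r) x))
      ∈ gradTransSet p (cyl r) W1 W2 Hm := by
    refine ⟨r, hr, uu ζ r, fun x _ => (hasFDerivAt_uu ζ r x).differentiableAt,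
      ⟨?_, ?_⟩, ?_, ?_, rfl⟩
    · intro i j
      have heq : (fun x => gradMat (uu ζ r) x i j) = fun x => Dmat ζ r x i j :=
        funext fun x => by rw [hgrad x]
      rw [heq]
      exact (continuous_Dmat_entry ζ r i j).measurable
    · intro Kc hKc _
      have heq : (fun x => frob (gradMat (uu ζ r) x) ^ p)
          = fun x => frob (Dmat ζ r x) ^ p := funext fun x => by rw [hgrad x]
      rw [heq]
      apply ContinuousOn.integrableOn_compact hKc
      apply Continuous.continuousOn
      apply Continuous.rpow_const
      · unfold frob
        exact Real.continuous_sqrt.comp (continuous_finset_sum _ fun i _ =>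
          continuous_finset_sum _ fun j _ => (continuous_Dmat_entry ζ r i j).pow 2)
      · exact fun _ => Or.inr (by linarith)
    · intro x _ hx0
      rw [hgrad x, Dmat_left ζ hr hx0]
    · intro x _ hx0
      rw [hgrad x, hHm]
      exact Dmat_right ζ hr hx0
  have hbdd : BddBelow (gradTransSet p (cyl r) W1 W2 Hm) := by
    refine ⟨0, ?_⟩
    rintro e ⟨M, hM, u, _, _, _, _, rfl⟩
    exact integral_nonneg fun x => Wtot_nonneg hC₁.le hG1 hG2 x _
  refine le_trans (csInf_le hbdd hmem) ?_
  have heqI : (∫ x in {y ∈ cyl r | |y 0| < r}, Wtot W1 W2 x (gradMat (uu ζ r) x))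
      = ∫ x in slab r r, Wtot W1 W2 x (Dmat ζ r x) := by
    congr 1
    funext x
    rw [hgrad x]
  rw [heqI]
  calc (∫ x in slab r r, Wtot W1 W2 x (Dmat ζ r x))
      ≤ 72 * C₂ * (1 + K) ^ 2 * δ ^ 2 * r ^ 3 := hle2
    _ = 72 * C₂ * (1 + K) ^ 2 * δ ^ 2 * r ^ 3 := rfl
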